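/- arXiv:2312.11438 — 2 statements merged into one kernel-verified Lean document; each statement's English description precedes it below -/
import Mathlib

section
/- Let f : ℝ → ℝ ∪ {+∞} be convex and lower semicontinuous with f(0) = 0, f(a) = +∞ for a < 0, and int(dom(f)) ≠ ∅. Define e(a) = a f(a) − 2 ∫₀ᵃ f(s) ds for a ∈ dom(f) and e(a) = +∞ otherwise. Then e is convex and lower semicontinuous with e(0) = 0 and e(a) = +∞ for a < 0, int(dom(e)) ≠ ∅, and e is non-decreasing on [0, ∞). -/
/-!
Write `g = (f ·).toReal` on `D = dom f`, an interval with least element `0` on which `g` is convex,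
and hence continuous since it is also lower semicontinuous. The identity
`e(b) - e(a) = b g(b) - a g(a) - 2 ∫ₐᵇ g` shows that replacing `g` on `[a, b]` (`0 ≤ a`) by a
function `h ≤ g` with `h(b) = g(b)` can only increase `e(b) - e(a)`, and for affine `L` one has
`e_L(t) = -L(0) t`. Comparing `g` with its secant lines therefore gives
`a g(b) - b g(a) ≤ e(b) - e(a)` for `a ≤ b` and `e(c) - e(x) ≤ (c - x) (c g(y) - y g(c)) / (y - c)`
for `x ≤ c < y`. Together these say that the slopes of `e` increase, i.e. `e` is convex. The first
bound is nonnegative by convexity of `g` and `g(0) = 0`, so `e` is monotone, and it forces `e → ∞`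
wherever `f → ∞` at the right end of `D`, which gives lower semicontinuity there.
-/

open Filter Set Topology MeasureTheory

noncomputable section
open scoped Classical

/-- Convexity for extended-real-valued functions on `ℝ`. -/
def EConvex (f : ℝ → EReal) : Prop :=
  ∀ x y t : ℝ, 0 ≤ t → t ≤ 1 →
    f (t * x + (1 - t) * y) ≤ (t : EReal) * f x + ((1 - t : ℝ) : EReal) * f y

/-- The `H^{-1}` energy density associated to `f`:
`e(a) = a·f(a) − 2∫₀ᵃ f(s) ds` for `a ∈ dom f`, `+∞` otherwise. -/
def eDen (f : ℝ → EReal) (a : ℝ) : EReal :=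
  if f a = ⊤ then ⊤
  else ((a * (f a).toReal - 2 * ∫ s in (0 : ℝ)..a, (f s).toReal : ℝ) : EReal)

section Secant

variable {g : ℝ → ℝ} {D : Set ℝ} {a b s : ℝ}

lemma ConvexOn.le_secant (hg : ConvexOn ℝ D g) (ha : a ∈ D) (hb : b ∈ D) (hab : a < b)
    (hs : s ∈ Icc a b) : g s ≤ g a + (g b - g a) / (b - a) * (s - a) := by
  rcases eq_or_lt_of_le hs.1 with rfl | has
  · simp
  have hslope := hg.secant_mono ha (hg.1.ordConnected.out ha hb hs) hb has.ne' hab.ne' hs.2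
  rw [div_le_iff₀ (sub_pos.2 has)] at hslope
  linarith

lemma ConvexOn.secant_le (hg : ConvexOn ℝ D g) (hs : s ∈ D) (hb : b ∈ D) (ha : a ∈ D)
    (hsa : s ≤ a) (hab : a < b) : g a + (g b - g a) / (b - a) * (s - a) ≤ g s := by
  rcases eq_or_lt_of_le hsa with rfl | hsa
  · simp
  have hslope := hg.secant_mono ha hs hb hsa.ne hab.ne' (hsa.trans hab).le
  rw [div_le_iff_of_neg (sub_neg.2 hsa)] at hslope
  linarith

end Secant

lemma continuousWithinAt_of_lowerSemicontinuousWithinAt_of_le {α β : Type*} [TopologicalSpace α]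
    [LinearOrder β] [TopologicalSpace β] [OrderTopology β] {g u : α → β} {s : Set α} {c : α}
    (hl : LowerSemicontinuousWithinAt g s c) (hu : ContinuousWithinAt u s c)
    (hle : ∀ x ∈ s, g x ≤ u x) (hc : u c = g c) : ContinuousWithinAt g s c := by
  refine tendsto_order.2 ⟨hl, fun b hb => ?_⟩
  filter_upwards [hu.eventually (gt_mem_nhds (hc ▸ hb : u c < b)), self_mem_nhdsWithin]
    with x hux hx
  exact (hle x hx).trans_lt hux

lemma ConvexOn.continuousOn_Icc_of_lowerSemicontinuousOn {g : ℝ → ℝ} {p q : ℝ}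
    (hg : ConvexOn ℝ (Icc p q) g) (hl : LowerSemicontinuousOn g (Icc p q)) :
    ContinuousOn g (Icc p q) := by
  rcases lt_or_ge p q with hpq | hqp
  · have hp := left_mem_Icc.2 hpq.le
    have hq := right_mem_Icc.2 hpq.le
    have hend : ∀ c ∈ Icc p q, c = p ∨ c = q → ContinuousWithinAt g (Icc p q) c := by
      intro c hc hcpq
      refine continuousWithinAt_of_lowerSemicontinuousWithinAt_of_le (hl c hc)
        (Continuous.continuousWithinAt (by fun_prop)) (fun x hx => hg.le_secant hp hq hpq hx) ?_
      rcases hcpq with rfl | rfl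
      · simp
      · field_simp [(sub_pos.2 hpq).ne']; ring
    exact hg.continuousOn_Icc hpq ((continuousWithinAt_Icc_iff_Ici hpq).1 (hend p hp (.inl rfl)))
      ((continuousWithinAt_Icc_iff_Iic hpq).1 (hend q hq (.inr rfl)))
  · exact (subsingleton_Icc_of_ge hqp).continuousOn g

lemma continuousOn_of_forall_continuousOn_Icc {β : Type*} [TopologicalSpace β] {F : ℝ → β}
    {D : Set ℝ} {p : ℝ} (hp : p ∈ lowerBounds D) (hF : ∀ a ∈ D, ContinuousOn F (Icc p a)) :
    ContinuousOn F D := by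
  intro c hc
  obtain ⟨a, ha, hca, hev⟩ : ∃ a ∈ D, c ≤ a ∧ ∀ᶠ x in 𝓝 c, x ∈ D → x ≤ a := by
    by_cases h : ∃ a ∈ D, c < a
    · obtain ⟨a, ha, hca⟩ := h
      exact ⟨a, ha, hca.le, Eventually.mono (Iio_mem_nhds hca) fun x hx _ => le_of_lt hx⟩
    · push Not at h
      exact ⟨c, hc, le_rfl, Eventually.of_forall h⟩
  refine (hF a ha c ⟨hp hc, hca⟩).mono_of_mem_nhdsWithin ?_
  exact mem_nhdsWithin_iff_eventually.2 (hev.mono fun x hx hxD => ⟨hp hxD, hx hxD⟩)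

lemma ConvexOn.continuousOn_of_lowerSemicontinuousOn {g : ℝ → ℝ} {D : Set ℝ} {p : ℝ}
    (hg : ConvexOn ℝ D g) (hl : LowerSemicontinuousOn g D) (hp : IsLeast D p) :
    ContinuousOn g D :=
  continuousOn_of_forall_continuousOn_Icc hp.2 fun a ha =>
    have hsub : Icc p a ⊆ D := hg.1.ordConnected.out hp.1 ha
    (hg.subset hsub (convex_Icc p a)).continuousOn_Icc_of_lowerSemicontinuousOn (hl.mono hsub)

def energy (g : ℝ → ℝ) (a : ℝ) : ℝ :=
  a * g a - 2 * ∫ s in (0 : ℝ)..a, g s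

lemma energy_affine (p m q t : ℝ) :
    energy (fun s => p + m * (s - q)) t = (m * q - p) * t := by
  have hline : (fun s => p + m * (s - q)) = fun s => (p - m * q) + m * s := by ext; ring
  rw [energy, hline, intervalIntegral.integral_add intervalIntegrable_const
    (intervalIntegral.intervalIntegrable_id.const_mul m), intervalIntegral.integral_const,
    intervalIntegral.integral_const_mul, integral_id, smul_eq_mul]
  ring

lemma energy_sub_energy_le_of_le {g h : ℝ → ℝ} {x c : ℝ} (hx : 0 ≤ x) (hxc : x ≤ c)
    (hg : IntervalIntegrable g volume 0 c) (hh : IntervalIntegrable h volume 0 c)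
    (hle : ∀ s ∈ Icc x c, h s ≤ g s) (hc : g c = h c) :
    energy g c - energy g x ≤ energy h c - energy h x := by
  have hx0 : x ∈ uIcc 0 c := by rw [uIcc_of_le (hx.trans hxc)]; exact ⟨hx, hxc⟩
  have split : ∀ k : ℝ → ℝ, IntervalIntegrable k volume 0 c →
      energy k c - energy k x = c * k c - x * k x - 2 * ∫ s in x..c, k s := by
    intro k hk
    rw [energy, energy, ← intervalIntegral.integral_add_adjacent_intervals
      (hk.mono_set (uIcc_subset_uIcc_left hx0))
      (hk.mono_set (uIcc_subset_uIcc hx0 right_mem_uIcc))]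
    ring
  have hint : ∫ s in x..c, h s ≤ ∫ s in x..c, g s :=
    intervalIntegral.integral_mono_on hxc (hh.mono_set (uIcc_subset_uIcc hx0 right_mem_uIcc))
      (hg.mono_set (uIcc_subset_uIcc hx0 right_mem_uIcc)) hle
  have hxx : x * h x ≤ x * g x := mul_le_mul_of_nonneg_left (hle x ⟨le_rfl, hxc⟩) hx
  rw [split g hg, split h hh, hc]
  linarith

lemma ContinuousOn.energy {g : ℝ → ℝ} {D : Set ℝ} (hg : ContinuousOn g D) (hD : D.OrdConnected)
    (h0 : IsLeast D 0) : ContinuousOn (energy g) D :=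
  continuousOn_of_forall_continuousOn_Icc h0.2 fun a ha => by
    have hsub : uIcc 0 a ⊆ D := hD.uIcc_subset h0.1 ha
    have hprim := intervalIntegral.continuousOn_primitive_interval'
      ((hg.mono hsub).intervalIntegrable (μ := volume)) left_mem_uIcc
    rw [uIcc_of_le (h0.2 ha)] at hsub hprim
    exact (continuousOn_id.mul (hg.mono hsub)).sub (continuousOn_const.mul hprim)

section ConvexEnergy

variable {g : ℝ → ℝ} {D : Set ℝ}

lemma ConvexOn.le_energy_sub_energy (hg : ConvexOn ℝ D g) (hcont : ContinuousOn g D)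
    (h0 : 0 ∈ D) {a b : ℝ} (ha : a ∈ D) (hb : b ∈ D) (ha0 : 0 ≤ a) (hab : a ≤ b) :
    a * g b - b * g a ≤ energy g b - energy g a := by
  rcases eq_or_lt_of_le hab with rfl | hab
  · simp
  set m := (g b - g a) / (b - a)
  have hcmp := energy_sub_energy_le_of_le (g := fun s => g a + m * (s - a)) (h := g) ha0 hab.le
    (Continuous.intervalIntegrable (by fun_prop) _ _)
    (hcont.mono (hg.1.ordConnected.uIcc_subset h0 hb)).intervalIntegrable
    (fun s hs => hg.le_secant ha hb hab hs) (by simp only [m]; field_simp; ring)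
  rw [energy_affine, energy_affine] at hcmp
  have hm : m * (b - a) = g b - g a := by simp only [m]; field_simp
  linear_combination hcmp - a * hm

lemma ConvexOn.energy_sub_energy_le (hg : ConvexOn ℝ D g) (hcont : ContinuousOn g D)
    (h0 : 0 ∈ D) {x c y : ℝ} (hx : x ∈ D) (hy : y ∈ D) (hx0 : 0 ≤ x) (hxc : x ≤ c)
    (hcy : c < y) :
    energy g c - energy g x ≤ (c - x) * ((c * g y - y * g c) / (y - c)) := by
  have hc : c ∈ D := hg.1.ordConnected.out hx hy ⟨hxc, hcy.le⟩
  set m := (g y - g c) / (y - c)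
  have hcmp := energy_sub_energy_le_of_le (g := g) (h := fun s => g c + m * (s - c)) hx0 hxc
    (hcont.mono (hg.1.ordConnected.uIcc_subset h0 hc)).intervalIntegrable
    (Continuous.intervalIntegrable (by fun_prop) _ _)
    (fun s hs => hg.secant_le (hg.1.ordConnected.out hx hc hs) hy hc hs.2 hcy) (by simp)
  rw [energy_affine, energy_affine] at hcmp
  have hm : m * c - g c = (c * g y - y * g c) / (y - c) := by
    simp only [m]; field_simp [(sub_pos.2 hcy).ne']; ring
  rw [← hm]
  linarith

lemma ConvexOn.convexOn_energy (hg : ConvexOn ℝ D g) (hcont : ContinuousOn g D)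
    (h0 : IsLeast D 0) : ConvexOn ℝ D (energy g) := by
  refine convexOn_of_slope_mono_adjacent hg.1 fun {x y z} hx hz hxy hyz => ?_
  have hy : y ∈ D := hg.1.ordConnected.out hx hz ⟨hxy.le, hyz.le⟩
  calc (energy g y - energy g x) / (y - x) ≤ (y * g z - z * g y) / (z - y) := by
        rw [div_le_iff₀ (sub_pos.2 hxy), mul_comm]
        exact hg.energy_sub_energy_le hcont h0.1 hx hz (h0.2 hx) hxy.le hyz
    _ ≤ (energy g z - energy g y) / (z - y) :=
        div_le_div_of_nonneg_right (hg.le_energy_sub_energy hcont h0.1 hy hz (h0.2 hy) hyz.le)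
          (sub_pos.2 hyz).le

lemma ConvexOn.monotoneOn_energy (hg : ConvexOn ℝ D g) (hcont : ContinuousOn g D)
    (h0 : IsLeast D 0) (hg0 : g 0 = 0) : MonotoneOn (energy g) D := by
  intro a ha b hb hab
  rcases eq_or_lt_of_le (h0.2 hb) with hb0 | hb0
  · rw [le_antisymm (hab.trans hb0.symm.le) (h0.2 ha), hb0]
  have hchord : b * g a ≤ a * g b := by
    have := hg.le_secant h0.1 hb hb0 ⟨h0.2 ha, hab⟩
    rw [hg0, sub_zero, sub_zero, zero_add, div_mul_eq_mul_div, le_div_iff₀ hb0] at this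
    linarith
  linarith [hg.le_energy_sub_energy hcont h0.1 ha hb (h0.2 ha) hab]

lemma ConvexOn.tendsto_energy_atTop (hg : ConvexOn ℝ D g) (hcont : ContinuousOn g D)
    (h0 : 0 ∈ D) {c d : ℝ} (hd : d ∈ D) (hd0 : 0 < d) (hdc : d < c)
    (htop : Tendsto g (𝓝[D] c) atTop) : Tendsto (energy g) (𝓝[D] c) atTop := by
  have hlower : ∀ᶠ x in 𝓝[D] c, energy g d - (c + 1) * |g d| + d * g x ≤ energy g x := by
    filter_upwards [self_mem_nhdsWithin, mem_nhdsWithin_of_mem_nhds (Ioo_mem_nhds hdc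
      (lt_add_one c))] with x hx hxc
    have hxgd : x * g d ≤ (c + 1) * |g d| :=
      (mul_le_mul_of_nonneg_left (le_abs_self _) (hd0.trans hxc.1).le).trans
        (mul_le_mul_of_nonneg_right hxc.2.le (abs_nonneg _))
    linarith [hg.le_energy_sub_energy hcont h0 hd hx hd0.le hxc.1.le]
  exact tendsto_atTop_mono' _ hlower
    (tendsto_atTop_add_const_left _ _ (htop.const_mul_atTop hd0))

end ConvexEnergy

section EReal

variable {F : ℝ → EReal}

lemma EConvex.ne_bot (hF : EConvex F) {x₀ : ℝ} (hl : LowerSemicontinuousAt F x₀)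
    (hx₀ : F x₀ ≠ ⊥) (a : ℝ) : F a ≠ ⊥ := by
  intro ha
  have hseg : ∀ t : ℝ, 0 < t → t ≤ 1 → F (t * a + (1 - t) * x₀) = ⊥ := fun t ht0 ht1 =>
    le_bot_iff.1 <| (hF a x₀ t ht0.le ht1).trans_eq <| by
      rw [ha, EReal.coe_mul_bot_of_pos ht0, EReal.bot_add]
  have hlt : (((F x₀).toReal - 1 : ℝ) : EReal) < F x₀ :=
    (EReal.coe_lt_coe_iff.2 (sub_one_lt _)).trans_le (EReal.coe_toReal_le hx₀)
  have htend : Tendsto (fun t : ℝ => t * a + (1 - t) * x₀) (𝓝[>] 0) (𝓝 x₀) := by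
    have : Continuous fun t : ℝ => t * a + (1 - t) * x₀ := by fun_prop
    simpa using (this.tendsto 0).mono_left nhdsWithin_le_nhds
  obtain ⟨t, hFt, ht⟩ := ((htend.eventually (hl _ hlt)).and (Ioc_mem_nhdsGT one_pos)).exists
  exact not_lt_bot ((hseg t ht.1 ht.2).symm ▸ hFt)

lemma EConvex.convexOn_toReal (hF : EConvex F) (hbot : ∀ a, F a ≠ ⊥) :
    ConvexOn ℝ {a | F a ≠ ⊤} fun a => (F a).toReal := by
  have key : ∀ x, F x ≠ ⊤ → ∀ y, F y ≠ ⊤ → ∀ t : ℝ, 0 ≤ t → t ≤ 1 →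
      F (t * x + (1 - t) * y) ≤ ((t * (F x).toReal + (1 - t) * (F y).toReal : ℝ) : EReal) := by
    intro x hx y hy t ht0 ht1
    rw [EReal.coe_add, EReal.coe_mul, EReal.coe_mul, EReal.coe_toReal hx (hbot x),
      EReal.coe_toReal hy (hbot y)]
    exact hF x y t ht0 ht1
  refine ⟨fun x hx y hy a b ha hb hab => ?_, fun x hx y hy a b ha hb hab => ?_⟩ <;>
    obtain rfl : b = 1 - a := by linarith
  · exact ne_top_of_le_ne_top (EReal.coe_ne_top _) (key x hx y hy a ha (by linarith))
  · have h := key x hx y hy a ha (by linarith)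
    rw [← EReal.coe_toReal (ne_top_of_le_ne_top (EReal.coe_ne_top _) h) (hbot _),
      EReal.coe_le_coe_iff] at h
    exact h

lemma EConvex.of_convexOn {h : ℝ → ℝ} {D : Set ℝ} (hh : ConvexOn ℝ D h)
    (hin : ∀ a ∈ D, F a = h a) (hout : ∀ a ∉ D, F a = ⊤) : EConvex F := by
  have hbot : ∀ a, F a ≠ ⊥ := fun a => by
    by_cases ha : a ∈ D
    · simp [hin a ha]
    · simp [hout a ha]
  have hmul : ∀ t : ℝ, 0 ≤ t → ∀ a, (t : EReal) * F a ≠ ⊥ := fun t ht a => by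
    rw [EReal.mul_ne_bot]; simp [hbot a, ht]
  intro x y t ht0 ht1
  rcases ht0.eq_or_lt with rfl | ht0
  · simp
  rcases ht1.eq_or_lt with rfl | ht1
  · simp
  by_cases hx : x ∈ D
  · by_cases hy : y ∈ D
    · have hmem : t * x + (1 - t) * y ∈ D := hh.1 hx hy ht0.le (by linarith) (by ring)
      rw [hin x hx, hin y hy, hin _ hmem, ← EReal.coe_mul, ← EReal.coe_mul, ← EReal.coe_add,
        EReal.coe_le_coe_iff]
      exact hh.2 hx hy ht0.le (by linarith) (by ring)
    · rw [hout y hy, EReal.coe_mul_top_of_pos (by linarith),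
        EReal.add_top_of_ne_bot (hmul t ht0.le x)]
      exact le_top
  · rw [hout x hx, EReal.coe_mul_top_of_pos ht0,
      EReal.top_add_of_ne_bot (hmul (1 - t) (by linarith) y)]
    exact le_top

end EReal

lemma LowerSemicontinuousWithinAt.lowerSemicontinuousAt_of_eq_top {α β : Type*}
    [TopologicalSpace α] [Preorder β] [OrderTop β] {F : α → β} {D : Set α} {c : α}
    (h : LowerSemicontinuousWithinAt F D c) (hout : ∀ x ∉ D, F x = ⊤) :
    LowerSemicontinuousAt F c := fun y hy => by
  filter_upwards [mem_nhdsWithin_iff_eventually.1 (h y hy)] with x hx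
  by_cases hxD : x ∈ D
  · exact hx hxD
  · exact hout x hxD ▸ hy.trans_le le_top

section ERealToReal

variable {α : Type*} [TopologicalSpace α] {F : α → EReal}

lemma LowerSemicontinuous.lowerSemicontinuousOn_toReal (hF : LowerSemicontinuous F)
    (hbot : ∀ a, F a ≠ ⊥) : LowerSemicontinuousOn (fun a => (F a).toReal) {a | F a ≠ ⊤} := by
  intro c _ y hy
  have hyc : (y : EReal) < F c :=
    (EReal.coe_lt_coe_iff.2 hy).trans_le (EReal.coe_toReal_le (hbot c))
  filter_upwards [mem_nhdsWithin_of_mem_nhds (hF c y hyc), self_mem_nhdsWithin] with x hx hxD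
  exact EReal.coe_lt_coe_iff.1 (hx.trans_le (EReal.le_coe_toReal hxD))

lemma LowerSemicontinuousAt.tendsto_toReal_atTop {c : α} (hF : LowerSemicontinuousAt F c)
    (hc : F c = ⊤) : Tendsto (fun a => (F a).toReal) (𝓝[{a | F a ≠ ⊤}] c) atTop := by
  refine tendsto_atTop.2 fun M => ?_
  have hM : (M : EReal) < F c := by rw [hc]; exact EReal.coe_lt_top M
  filter_upwards [mem_nhdsWithin_of_mem_nhds (hF M hM), self_mem_nhdsWithin] with x hx hxD
  exact (EReal.coe_lt_coe_iff.1 (hx.trans_le (EReal.le_coe_toReal hxD))).le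

end ERealToReal

section EDen

variable {f : ℝ → EReal} {a : ℝ}

lemma eDen_of_ne_top (h : f a ≠ ⊤) : eDen f a = energy (fun s => (f s).toReal) a := if_neg h

lemma eDen_of_eq_top (h : f a = ⊤) : eDen f a = ⊤ := if_pos h

lemma continuousWithinAt_eDen (hg : ConvexOn ℝ {a | f a ≠ ⊤} fun s => (f s).toReal)
    (hgc : ContinuousOn (fun s => (f s).toReal) {a | f a ≠ ⊤}) (h0 : IsLeast {a | f a ≠ ⊤} 0)
    (hdom : (interior {a | f a ≠ ⊤}).Nonempty) {c : ℝ} (hc : LowerSemicontinuousAt f c) :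
    ContinuousWithinAt (eDen f) {a | f a ≠ ⊤} c := by
  have hDsub : {a | f a ≠ ⊤} ⊆ Ici 0 := h0.2
  by_cases hcD : f c ≠ ⊤
  · exact ((continuous_coe_real_ereal.comp_continuousOn (hgc.energy hg.1.ordConnected h0)) c
      hcD).congr (fun x hx => eDen_of_ne_top hx) (eDen_of_ne_top hcD)
  rcases lt_or_ge c 0 with hc0 | hc0
  · have hcl : c ∉ closure {a | f a ≠ ⊤} := fun h =>
      not_le.2 hc0 (closure_minimal hDsub isClosed_Ici h)
    rw [ContinuousWithinAt, notMem_closure_iff_nhdsWithin_eq_bot.1 hcl]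
    exact tendsto_bot
  obtain ⟨d, hd⟩ := hdom
  have hd0 : 0 < d := by simpa using interior_mono hDsub hd
  have hdD : f d ≠ ⊤ := interior_subset hd
  have hdc : d < c := lt_of_not_ge fun hcd => hcD (hg.1.ordConnected.out h0.1 hdD ⟨hc0, hcd⟩)
  have hcTop : f c = ⊤ := not_not.1 hcD
  rw [ContinuousWithinAt, eDen_of_eq_top hcTop]
  refine (EReal.tendsto_coe_nhds_top_iff.2 (hg.tendsto_energy_atTop hgc h0.1 hdD hd0 hdc
    (hc.tendsto_toReal_atTop hcTop))).congr' ?_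
  filter_upwards [self_mem_nhdsWithin] with x hx using (eDen_of_ne_top hx).symm

end EDen

/-- The `H^{-1}` energy density `e` is convex and lower semicontinuous with
`e(0) = 0`, `e = +∞` on `(−∞, 0)`, `int(dom e) ≠ ∅`, and `e` is non-decreasing
on `[0, ∞)`. -/
theorem statement5 (f : ℝ → EReal) (hconv : EConvex f)
    (hlsc : LowerSemicontinuous f) (hf0 : f 0 = 0)
    (hneg : ∀ a : ℝ, a < 0 → f a = ⊤)
    (hdom : (interior {a : ℝ | f a ≠ ⊤}).Nonempty) :
    EConvex (eDen f) ∧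
    LowerSemicontinuous (eDen f) ∧
    eDen f 0 = 0 ∧
    (∀ a : ℝ, a < 0 → eDen f a = ⊤) ∧
    (interior {a : ℝ | eDen f a ≠ ⊤}).Nonempty ∧
    (∀ a b : ℝ, 0 ≤ a → a ≤ b → eDen f a ≤ eDen f b) := by
  have hbot : ∀ a, f a ≠ ⊥ := hconv.ne_bot (hlsc 0) (by simp [hf0])
  have h0 : IsLeast {a | f a ≠ ⊤} 0 :=
    ⟨by simp [hf0], fun a ha => not_lt.1 fun h => ha (hneg a h)⟩
  have hg := hconv.convexOn_toReal hbot
  have hgc := hg.continuousOn_of_lowerSemicontinuousOn (hlsc.lowerSemicontinuousOn_toReal hbot) h0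
  have hout : ∀ a ∉ {a | f a ≠ ⊤}, eDen f a = ⊤ := fun a ha => eDen_of_eq_top (not_not.1 ha)
  have hdomE : {a | eDen f a ≠ ⊤} = {a | f a ≠ ⊤} := by
    ext a
    by_cases ha : f a = ⊤
    · simp [ha, eDen_of_eq_top ha]
    · simp [ha, eDen_of_ne_top ha]
  refine ⟨EConvex.of_convexOn (hg.convexOn_energy hgc h0) (fun a ha => eDen_of_ne_top ha) hout,
    fun c => (continuousWithinAt_eDen hg hgc h0 hdom (hlsc c)).lowerSemicontinuousWithinAt
      |>.lowerSemicontinuousAt_of_eq_top hout,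
    by simp [eDen_of_ne_top h0.1, energy], fun a ha => eDen_of_eq_top (hneg a ha),
    hdomE ▸ hdom, fun a b ha hab => ?_⟩
  by_cases hb : f b = ⊤
  · exact (eDen_of_eq_top hb).symm ▸ le_top
  have haD : f a ≠ ⊤ := hg.1.ordConnected.out h0.1 hb ⟨ha, hab⟩
  rw [eDen_of_ne_top haD, eDen_of_ne_top hb, EReal.coe_le_coe_iff]
  exact hg.monotoneOn_energy hgc h0 (by simp [hf0]) haD hb hab
end
end

section
/- Let e be the H^{-1} energy density associated to f as above. If e⁻¹(0) has more than one point, then there exists b ∈ ℝ such that f(a) = b·a for all a ∈ e⁻¹(0); moreover such b satisfies f*(b) = 0. -/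
open Filter Set Topology MeasureTheory

noncomputable section
open scoped Classical

/-- Legendre–Fenchel (convex) conjugate: `f*(b) = sup_a (a·b − f(a))`. -/
def econj (f : ℝ → EReal) (b : ℝ) : EReal := ⨆ a : ℝ, ((a * b : ℝ) : EReal) - f a

/-!
A zero `q > 0` of `e` forces `f` to be linear on `[0, q]`. Convexity and `f 0 = 0` give
`q f(p) ≤ p f(q)` for `0 ≤ p ≤ q`; conversely, bounding `∫₀ᵖ f` and `∫ₚ^q f` by trapezoids turns
`q f(q) = 2 ∫₀^q f` into `p f(q) ≤ q f(p)`. Fix a zero `c > 0` and `b = f(c)/c`: of two zeros one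
lies in the interval of the other, so all zeros share the slope `b`. Beyond `c` the slope `f(a)/a`
only grows, so `f(a) ≥ b a` everywhere, i.e. `f*(b) ≤ 0`, with equality attained at `a = 0`.
-/

namespace ConvexOn

variable {g : ℝ → ℝ} {a b x : ℝ}

theorem sub_mul_le_of_mem_Icc (hg : ConvexOn ℝ (Icc a b) g) (hx : x ∈ Icc a b) :
    (b - a) * g x ≤ (b - x) * g a + (x - a) * g b := by
  rcases hx.1.eq_or_lt with rfl | hax
  · linarith
  rcases hx.2.eq_or_lt with rfl | hxb
  · linarith
  exact hg.secant_mono_aux1 ⟨le_rfl, hx.1.trans hx.2⟩ ⟨hx.1.trans hx.2, le_rfl⟩ hax hxb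

theorem intervalIntegrable (hab : a ≤ b) (hg : ConvexOn ℝ (Icc a b) g) :
    IntervalIntegrable g volume a b := by
  set M := max (g a) (g b)
  have hupper : ∀ x ∈ Icc a b, g x ≤ M := fun x hx =>
    hg.le_on_segment (left_mem_Icc.2 hab) (right_mem_Icc.2 hab) (segment_eq_Icc hab ▸ hx)
  -- reflect `x` through the midpoint of `[a, b]`
  have hlower : ∀ x ∈ Icc a b, 2 * g ((a + b) / 2) - M ≤ g x := by
    intro x hx
    have hx' : a + b - x ∈ Icc a b := ⟨by linarith [hx.2], by linarith [hx.1]⟩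
    have hmid := hg.2 hx hx' (by norm_num : (0 : ℝ) ≤ 1 / 2) (by norm_num : (0 : ℝ) ≤ 1 / 2)
      (by norm_num)
    simp only [smul_eq_mul] at hmid
    rw [show 1 / 2 * x + 1 / 2 * (a + b - x) = (a + b) / 2 by ring] at hmid
    linarith [hupper _ hx']
  rw [intervalIntegrable_iff_integrableOn_Ioo_of_le hab]
  have hcont : ContinuousOn g (Ioo a b) := interior_Icc (a := a) ▸ hg.continuousOn_interior
  refine IntegrableOn.of_bound measure_Ioo_lt_top
    (hcont.aestronglyMeasurable measurableSet_Ioo) (max |2 * g ((a + b) / 2) - M| |M|)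
    ((ae_restrict_iff' measurableSet_Ioo).2 (Eventually.of_forall fun x hx => ?_))
  exact abs_le_max_abs_abs (hlower x (Ioo_subset_Icc_self hx)) (hupper x (Ioo_subset_Icc_self hx))

theorem integral_le_trapezoid (hab : a ≤ b) (hg : ConvexOn ℝ (Icc a b) g) :
    ∫ x in a..b, g x ≤ (b - a) * (g a + g b) / 2 := by
  rcases hab.eq_or_lt with rfl | hlt
  · simp
  have hba : 0 < b - a := sub_pos.2 hlt
  calc ∫ x in a..b, g x ≤ ∫ x in a..b, ((b - x) * g a + (x - a) * g b) / (b - a) := by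
        refine intervalIntegral.integral_mono_on hab (hg.intervalIntegrable hab)
          (by apply Continuous.intervalIntegrable; fun_prop) fun x hx => ?_
        rw [le_div_iff₀ hba, mul_comm]
        exact hg.sub_mul_le_of_mem_Icc hx
    _ = (b - a) * (g a + g b) / 2 := by
        have hlin : ∀ x, (b - x) * g a + (x - a) * g b = (b * g a - a * g b) + (g b - g a) * x :=
          fun x => by ring
        simp only [hlin, intervalIntegral.integral_div]
        rw [intervalIntegral.integral_add intervalIntegrable_const
          (intervalIntegral.intervalIntegrable_id.const_mul _), intervalIntegral.integral_const,
          intervalIntegral.integral_const_mul, integral_id, smul_eq_mul]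
        field_simp
        ring

end ConvexOn

def energyDensity (g : ℝ → ℝ) (a : ℝ) : ℝ := a * g a - 2 * ∫ s in (0 : ℝ)..a, g s

theorem ConvexOn.mul_eq_mul_of_energyDensity_eq_zero {g : ℝ → ℝ} {p q : ℝ}
    (hg : ConvexOn ℝ (Icc 0 q) g) (h0 : g 0 = 0) (he : energyDensity g q = 0)
    (hp : p ∈ Icc 0 q) : q * g p = p * g q := by
  have hchord := hg.sub_mul_le_of_mem_Icc hp
  refine le_antisymm (by simpa [h0] using hchord) ?_
  have hg₁ := hg.subset (Icc_subset_Icc le_rfl hp.2) (convex_Icc _ _)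
  have hg₂ := hg.subset (Icc_subset_Icc hp.1 le_rfl) (convex_Icc _ _)
  have hsplit := intervalIntegral.integral_add_adjacent_intervals
    (hg₁.intervalIntegrable hp.1) (hg₂.intervalIntegrable hp.2)
  have h₁ := hg₁.integral_le_trapezoid hp.1
  have h₂ := hg₂.integral_le_trapezoid hp.2
  rw [h0] at h₁
  unfold energyDensity at he
  linarith

namespace EConvex

variable {f : ℝ → EReal}

/-- `⊤ + ⊥ = ⊥` in `EReal`, so a single value `⊥` drags every other value down to `⊥`. -/
theorem ne_bot_s8 (hf : EConvex f) {y : ℝ} (hy : f y ≠ ⊥) (x : ℝ) : f x ≠ ⊥ := by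
  intro hx
  have h := hf (2 * y - x) x (1 / 2) (by norm_num) (by norm_num)
  rw [hx, EReal.coe_mul_bot_of_pos (by norm_num), EReal.add_bot, le_bot_iff] at h
  exact hy (by convert h using 2; ring)

theorem ne_top_of_mem_Icc (hf : EConvex f) {x y z : ℝ} (hx : f x ≠ ⊤) (hy : f y ≠ ⊤)
    (hz : z ∈ Icc x y) : f z ≠ ⊤ := by
  obtain ⟨s, t, hs, ht, hst, rfl⟩ := (segment_eq_Icc (hz.1.trans hz.2)).symm ▸ hz
  obtain rfl : t = 1 - s := by linarith
  have h := hf x y s hs (by linarith)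
  refine ne_top_of_le_ne_top (EReal.add_ne_top ?_ ?_) (by simpa using h)
  · exact (EReal.mul_ne_top _ _).2 ⟨.inl (EReal.coe_ne_bot _), .inl (mod_cast hs),
      .inl (EReal.coe_ne_top _), .inr hx⟩
  · exact (EReal.mul_ne_top _ _).2 ⟨.inl (EReal.coe_ne_bot _), .inl (mod_cast ht),
      .inl (EReal.coe_ne_top _), .inr hy⟩

theorem convexOn_toReal_s8 (hf : EConvex f) (hbot : ∀ x, f x ≠ ⊥) {s : Set ℝ} (hs : Convex ℝ s)
    (htop : ∀ x ∈ s, f x ≠ ⊤) : ConvexOn ℝ s fun x => (f x).toReal := by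
  refine ⟨hs, fun x hx y hy a b ha hb hab => ?_⟩
  obtain rfl : b = 1 - a := by linarith
  have h := hf x y a ha (by linarith)
  rw [← EReal.coe_toReal (htop x hx) (hbot x), ← EReal.coe_toReal (htop y hy) (hbot y),
    ← EReal.coe_mul, ← EReal.coe_mul, ← EReal.coe_add] at h
  simp only [smul_eq_mul]
  exact (EReal.toReal_le_toReal h (hbot _) (EReal.coe_ne_top _)).trans_eq (EReal.toReal_coe _)

theorem convexOn_toReal_Icc (hf : EConvex f) (h0 : f 0 = 0) {q : ℝ} (hq : f q ≠ ⊤) :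
    ConvexOn ℝ (Icc 0 q) fun x => (f x).toReal :=
  hf.convexOn_toReal_s8 (hf.ne_bot_s8 (y := 0) (by simp [h0])) (convex_Icc 0 q)
    fun _ hx => hf.ne_top_of_mem_Icc (by simp [h0]) hq hx

end EConvex

theorem eDen_eq_zero {f : ℝ → EReal} {a : ℝ} (h : eDen f a = 0) :
    f a ≠ ⊤ ∧ energyDensity (fun s => (f s).toReal) a = 0 := by
  by_cases ha : f a = ⊤
  · simp [eDen, ha] at h
  · simp only [eDen, ha, if_false, EReal.coe_eq_zero] at h
    exact ⟨ha, h⟩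

theorem econj_eq_zero {f : ℝ → EReal} {b : ℝ} (h0 : f 0 = 0)
    (h : ∀ a : ℝ, ((a * b : ℝ) : EReal) ≤ f a) : econj f b = 0 :=
  le_antisymm (iSup_le fun a => EReal.sub_nonpos.2 (h a)) (le_iSup_of_le 0 (by simp [h0]))

theorem exists_pos_eDen_eq_zero {f : ℝ → EReal} (hneg : ∀ a : ℝ, a < 0 → f a = ⊤)
    (hmulti : ∃ a₁ a₂ : ℝ, a₁ ≠ a₂ ∧ eDen f a₁ = 0 ∧ eDen f a₂ = 0) :
    ∃ c, 0 < c ∧ eDen f c = 0 := by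
  have hnonneg : ∀ a, eDen f a = 0 → 0 ≤ a := fun a ha =>
    not_lt.1 fun h => (eDen_eq_zero ha).1 (hneg a h)
  obtain ⟨a₁, a₂, hne, h₁, h₂⟩ := hmulti
  rcases hne.lt_or_gt with h | h
  · exact ⟨a₂, (hnonneg a₁ h₁).trans_lt h, h₂⟩
  · exact ⟨a₁, (hnonneg a₂ h₂).trans_lt h, h₁⟩

theorem statement8_general (f : ℝ → EReal) (hconv : EConvex f) (hf0 : f 0 = 0)
    (hneg : ∀ a : ℝ, a < 0 → f a = ⊤)
    (hmulti : ∃ a₁ a₂ : ℝ, a₁ ≠ a₂ ∧ eDen f a₁ = 0 ∧ eDen f a₂ = 0) :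
    ∃ b : ℝ, (∀ a : ℝ, eDen f a = 0 → f a = ((b * a : ℝ) : EReal)) ∧
      econj f b = 0 := by
  have hnonneg : ∀ a, f a ≠ ⊤ → 0 ≤ a := fun a ha => not_lt.1 fun h => ha (hneg a h)
  obtain ⟨c, hc, hec⟩ := exists_pos_eDen_eq_zero hneg hmulti
  have hbot : ∀ a, f a ≠ ⊥ := hconv.ne_bot_s8 (y := 0) (by simp [hf0])
  set g : ℝ → ℝ := fun s => (f s).toReal
  have hg0 : g 0 = 0 := by simp [g, hf0]
  have hlin : ∀ q, eDen f q = 0 → ∀ p ∈ Icc 0 q, q * g p = p * g q := fun q hq p hp =>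
    (hconv.convexOn_toReal_Icc hf0 (eDen_eq_zero hq).1).mul_eq_mul_of_energyDensity_eq_zero
      hg0 (eDen_eq_zero hq).2 hp
  refine ⟨g c / c, fun a ha => ?_, econj_eq_zero hf0 fun a => ?_⟩
  · have hfa := (eDen_eq_zero ha).1
    have hca : c * g a = a * g c := by
      rcases le_total a c with h | h
      · exact hlin c hec a ⟨hnonneg a hfa, h⟩
      · exact (hlin a ha c ⟨hc.le, h⟩).symm
    rw [← EReal.coe_toReal hfa (hbot a), EReal.coe_eq_coe_iff]
    field_simp
    linarith
  · by_cases hfa : f a = ⊤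
    · simp [hfa]
    have hca : a * g c ≤ c * g a := by
      rcases le_total a c with h | h
      · exact (hlin c hec a ⟨hnonneg a hfa, h⟩).ge
      · simpa [g, hf0] using (hconv.convexOn_toReal_Icc hf0 hfa).sub_mul_le_of_mem_Icc ⟨hc.le, h⟩
    rw [← EReal.coe_toReal hfa (hbot a), EReal.coe_le_coe_iff, mul_div_assoc', div_le_iff₀ hc]
    linarith

/-- If `e⁻¹(0)` has more than one point, then there exists `b ∈ ℝ` such that
`f(a) = b·a` for all `a ∈ e⁻¹(0)`; moreover such `b` satisfies `f*(b) = 0`. -/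
theorem statement8 (f : ℝ → EReal) (hconv : EConvex f)
    (hlsc : LowerSemicontinuous f) (hf0 : f 0 = 0)
    (hneg : ∀ a : ℝ, a < 0 → f a = ⊤)
    (hdom : (interior {a : ℝ | f a ≠ ⊤}).Nonempty)
    (hmulti : ∃ a₁ a₂ : ℝ, a₁ ≠ a₂ ∧ eDen f a₁ = 0 ∧ eDen f a₂ = 0) :
    ∃ b : ℝ, (∀ a : ℝ, eDen f a = 0 → f a = ((b * a : ℝ) : EReal)) ∧
      econj f b = 0 :=
  statement8_general f hconv hf0 hneg hmulti
end
end
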